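/- (QFTr Plancherel, quaternion-valued) For f, g ∈ L²(ℝ²;ℍ) with suitable integrability, the quaternion-valued inner product (f,g) = ∫ f(x)·g̃(x) d²x satisfies (f,g) = (1/(2π)²)·(F_r f, F_r g), where F_r f(u,v) = ∫ f(x,y)·e^{-i xu}·e^{-j yv} dx dy is the right-sided QFT. -/

import Mathlib

/-!
Substitute the inversion formula for `f`. Conjugation reverses products and inverts the unit
exponentials, so `(F_r g)~(u,v) = ∫ e^{j yv} e^{i xu} g̃(x,y)` has exactly the kernel of the
inversion formula. That kernel is unimodular, so Fubini applies and exchanging the two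
integrals gives `(2π)⁻² ∫ F_r f · (F_r g)~`.
-/

open Quaternion MeasureTheory Real

noncomputable def qi : ℍ[ℝ] := ⟨0,1,0,0⟩
noncomputable def qj : ℍ[ℝ] := ⟨0,0,1,0⟩
noncomputable def qk : ℍ[ℝ] := ⟨0,0,0,1⟩
/-- exp(θ·v) = cos θ + v sin θ for a quaternion unit v with v² = -1. -/
noncomputable def qexp (v : ℍ[ℝ]) (θ : ℝ) : ℍ[ℝ] := (Real.cos θ : ℍ[ℝ]) + Real.sin θ • v

/-- The two-sided quaternion Fourier transform. -/
noncomputable def QFT (f : ℝ × ℝ → ℍ[ℝ]) (u v : ℝ) : ℍ[ℝ] :=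
  ∫ p : ℝ × ℝ, qexp qi (-(p.1 * u)) * f p * qexp qj (-(p.2 * v))

/-- The right-sided quaternion Fourier transform. -/
noncomputable def QFTr (f : ℝ × ℝ → ℍ[ℝ]) (u v : ℝ) : ℍ[ℝ] :=
  ∫ p : ℝ × ℝ, f p * qexp qi (-(p.1 * u)) * qexp qj (-(p.2 * v))

instance : StarModule ℝ ℍ[ℝ] := ⟨Quaternion.star_smul⟩

theorem integral_star {α E : Type*} [MeasurableSpace α] {μ : Measure α} [NormedAddCommGroup E]
    [NormedSpace ℝ E] [StarAddMonoid E] [StarModule ℝ E] [ContinuousStar E] (f : α → E) :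
    ∫ x, star (f x) ∂μ = star (∫ x, f x ∂μ) :=
  (starL' ℝ).integral_comp_comm f

theorem integral_integral_mul_kernel_mul {α β A : Type*} [MeasurableSpace α] [MeasurableSpace β]
    {μ : Measure α} {ν : Measure β} [SFinite μ] [SFinite ν]
    [NormedRing A] [NormedSpace ℝ A] [IsScalarTower ℝ A A] [SMulCommClass ℝ A A]
    {F : β → A} {G : α → A} {K : β → α → A} {C : ℝ}
    (hF : Integrable F ν) (hG : Integrable G μ)
    (hK : AEStronglyMeasurable (Function.uncurry K) (ν.prod μ)) (hK_le : ∀ w p, ‖K w p‖ ≤ C) :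
    ∫ p, (∫ w, F w * K w p ∂ν) * G p ∂μ = ∫ w, F w * ∫ p, K w p * G p ∂μ ∂ν := by
  have h_prod : Integrable (Function.uncurry fun w p => F w * K w p * G p) (ν.prod μ) := by
    refine ((hF.norm.mul_prod hG.norm).const_mul C).mono'
      ((hF.aestronglyMeasurable.comp_fst.mul hK).mul hG.aestronglyMeasurable.comp_snd) ?_
    refine .of_forall fun z => ?_
    calc ‖F z.1 * K z.1 z.2 * G z.2‖ ≤ ‖F z.1‖ * C * ‖G z.2‖ := by
          refine (norm_mul_le _ _).trans (mul_le_mul_of_nonneg_right ?_ (norm_nonneg _))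
          exact (norm_mul_le _ _).trans (mul_le_mul_of_nonneg_left (hK_le _ _) (norm_nonneg _))
      _ = C * (‖F z.1‖ * ‖G z.2‖) := by ring
  calc ∫ p, (∫ w, F w * K w p ∂ν) * G p ∂μ = ∫ p, ∫ w, F w * K w p * G p ∂ν ∂μ := by
        refine integral_congr_ae ?_
        filter_upwards [hK.prod_swap.prodMk_left] with p hKp
        exact (integral_mul_const_of_integrable (hF.mul_bdd hKp (.of_forall (hK_le · p)))).symm
    _ = ∫ w, ∫ p, F w * K w p * G p ∂μ ∂ν := (integral_integral_swap h_prod).symm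
    _ = ∫ w, F w * ∫ p, K w p * G p ∂μ ∂ν := by
        refine integral_congr_ae ?_
        filter_upwards [hK.prodMk_left] with w hKw
        simp_rw [mul_assoc]
        exact integral_const_mul_of_integrable (hG.bdd_mul hKw (.of_forall (hK_le w)))

@[fun_prop]
theorem continuous_qexp (v : ℍ[ℝ]) : Continuous (qexp v) :=
  (Quaternion.continuous_coe.comp Real.continuous_cos).add
    (Real.continuous_sin.smul continuous_const)

theorem star_qexp {v : ℍ[ℝ]} (hv : v.re = 0) (θ : ℝ) : star (qexp v θ) = qexp v (-θ) := by
  rw [qexp, qexp, star_add, Quaternion.star_coe, Quaternion.star_smul, Quaternion.star_eq_neg.2 hv,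
    Real.cos_neg, Real.sin_neg, smul_neg, neg_smul]

theorem norm_qexp {v : ℍ[ℝ]} (hv : v.re = 0) (hv₁ : normSq v = 1) (θ : ℝ) : ‖qexp v θ‖ = 1 := by
  have h : normSq (qexp v θ) = 1 := by
    rw [normSq_def', hv] at hv₁
    rw [normSq_def']
    simp only [qexp, re_add, re_coe, re_smul, imI_add, imI_coe, imI_smul, imJ_add, imJ_coe,
      imJ_smul, imK_add, imK_coe, imK_smul, hv, smul_eq_mul]
    linear_combination Real.sin θ ^ 2 * hv₁ + Real.sin_sq_add_cos_sq θ
  rw [norm_eq_sqrt_real_inner, Quaternion.inner_self, h, Real.sqrt_one]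

theorem qi_re : qi.re = 0 := rfl

theorem qj_re : qj.re = 0 := rfl

theorem normSq_qi : normSq qi = 1 := by
  rw [normSq_def']
  norm_num [qi]

theorem normSq_qj : normSq qj = 1 := by
  rw [normSq_def']
  norm_num [qj]

noncomputable def qftrInvKernel (w p : ℝ × ℝ) : ℍ[ℝ] := qexp qj (w.2 * p.2) * qexp qi (w.1 * p.1)

theorem norm_qftrInvKernel (w p : ℝ × ℝ) : ‖qftrInvKernel w p‖ = 1 := by
  rw [qftrInvKernel, norm_mul, norm_qexp qj_re normSq_qj, norm_qexp qi_re normSq_qi, one_mul]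

theorem continuous_qftrInvKernel : Continuous (Function.uncurry qftrInvKernel) := by
  unfold qftrInvKernel
  fun_prop

theorem star_QFTr (g : ℝ × ℝ → ℍ[ℝ]) (w : ℝ × ℝ) :
    star (QFTr g w.1 w.2) = ∫ p, qftrInvKernel w p * star (g p) := by
  rw [QFTr, ← integral_star]
  congr 1
  funext p
  rw [star_mul, star_mul, star_qexp qj_re, star_qexp qi_re, neg_neg, neg_neg, qftrInvKernel,
    mul_comm p.2, mul_comm p.1, mul_assoc]

theorem QFTr_Plancherel_general (f g : ℝ × ℝ → ℍ[ℝ])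
    (hg : Integrable g)
    (hFf : Integrable (fun w : ℝ × ℝ => QFTr f w.1 w.2))
    (hinv : ∀ x y : ℝ, f (x, y) =
      ((2 * π) ^ 2)⁻¹ • ∫ w : ℝ × ℝ, QFTr f w.1 w.2 * qexp qj (w.2 * y) * qexp qi (w.1 * x)) :
    (∫ p : ℝ × ℝ, f p * star (g p)) =
      ((2 * π) ^ 2)⁻¹ • ∫ w : ℝ × ℝ, QFTr f w.1 w.2 * star (QFTr g w.1 w.2) := by
  have hinv' (p : ℝ × ℝ) :
      f p = ((2 * π) ^ 2)⁻¹ • ∫ w, QFTr f w.1 w.2 * qftrInvKernel w p := by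
    simpa only [qftrInvKernel, mul_assoc] using hinv p.1 p.2
  have hg_star : Integrable (fun p => star (g p)) :=
    memLp_one_iff_integrable.1 (memLp_one_iff_integrable.2 hg).star
  simp_rw [hinv', smul_mul_assoc, integral_smul, star_QFTr]
  rw [integral_integral_mul_kernel_mul hFf hg_star continuous_qftrInvKernel.aestronglyMeasurable
    fun w p => (norm_qftrInvKernel w p).le]

theorem QFTr_Plancherel (f g : ℝ × ℝ → ℍ[ℝ])
    (hf : Integrable f) (hg : Integrable g)
    (hFf : Integrable (fun w : ℝ × ℝ => QFTr f w.1 w.2))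
    (hFg : Integrable (fun w : ℝ × ℝ => QFTr g w.1 w.2))
    (hinv : ∀ x y : ℝ, f (x, y) =
      ((2 * π) ^ 2)⁻¹ • ∫ w : ℝ × ℝ, QFTr f w.1 w.2 * qexp qj (w.2 * y) * qexp qi (w.1 * x)) :
    (∫ p : ℝ × ℝ, f p * star (g p)) =
      ((2 * π) ^ 2)⁻¹ • ∫ w : ℝ × ℝ, QFTr f w.1 w.2 * star (QFTr g w.1 w.2) :=
  QFTr_Plancherel_general f g hg hFf hinv
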